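/- Define rational functions on k² by r₁(u,v) = 27v(v-9-2u)³/(4v² - 18uv + 27v - u²v + 4u³) and r₂(u,v) = -1296v(v-9-2u)⁴/((v-27)(4v² - 18uv + 27v - u²v + 4u³)), and β(u,v) = (u', v') where u' = (v-3u)(324u² + 15u²v - 378uv - 4uv² + 243v + 72v²)/((v-27)(4u³ + 27v - 18uv - u²v + 4v²)) and v' = -4(v-3u)³/(4u³ + 27v - 18uv - u²v + 4v²). Then r₁ and r₂ are invariant under β: r₁(β(u,v)) = r₁(u,v) and r₂(β(u,v)) = r₂(u,v), wherever all expressions are defined. -/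
import Mathlib
set_option maxHeartbeats 2000000 in
theorem r1_r2_beta_invariant {k : Type*} [Field k] [CharZero k] (u v u' v' : k)
    (hD : 4 * u ^ 3 + 27 * v - 18 * u * v - u ^ 2 * v + 4 * v ^ 2 ≠ 0)
    (hv27 : v ≠ 27)
    (hu' : u' = (v - 3 * u) *
        (324 * u ^ 2 + 15 * u ^ 2 * v - 378 * u * v - 4 * u * v ^ 2 + 243 * v + 72 * v ^ 2) /
        ((v - 27) * (4 * u ^ 3 + 27 * v - 18 * u * v - u ^ 2 * v + 4 * v ^ 2)))
    (hv' : v' = -4 * (v - 3 * u) ^ 3 /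
        (4 * u ^ 3 + 27 * v - 18 * u * v - u ^ 2 * v + 4 * v ^ 2))
    (hD' : 4 * u' ^ 3 + 27 * v' - 18 * u' * v' - u' ^ 2 * v' + 4 * v' ^ 2 ≠ 0)
    (hv27' : v' ≠ 27) :
    27 * v' * (v' - 9 - 2 * u') ^ 3 /
        (4 * v' ^ 2 - 18 * u' * v' + 27 * v' - u' ^ 2 * v' + 4 * u' ^ 3) =
      27 * v * (v - 9 - 2 * u) ^ 3 /
        (4 * v ^ 2 - 18 * u * v + 27 * v - u ^ 2 * v + 4 * u ^ 3) ∧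
    -1296 * v' * (v' - 9 - 2 * u') ^ 4 /
        ((v' - 27) * (4 * v' ^ 2 - 18 * u' * v' + 27 * v' - u' ^ 2 * v' + 4 * u' ^ 3)) =
      -1296 * v * (v - 9 - 2 * u) ^ 4 /
        ((v - 27) * (4 * v ^ 2 - 18 * u * v + 27 * v - u ^ 2 * v + 4 * u ^ 3)) := by
  have hW : v - 27 ≠ 0 := sub_ne_zero.mpr hv27
  have hW' : v' - 27 ≠ 0 := sub_ne_zero.mpr hv27'
  rw [show 4 * v ^ 2 - 18 * u * v + 27 * v - u ^ 2 * v + 4 * u ^ 3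
      = 4 * u ^ 3 + 27 * v - 18 * u * v - u ^ 2 * v + 4 * v ^ 2 from by ring]
  rw [show 4 * v' ^ 2 - 18 * u' * v' + 27 * v' - u' ^ 2 * v' + 4 * u' ^ 3
      = 4 * u' ^ 3 + 27 * v' - 18 * u' * v' - u' ^ 2 * v' + 4 * v' ^ 2 from by ring]
  obtain ⟨E, hEdef⟩ : ∃ x : k, x = 4 * u ^ 3 + 27 * v - 18 * u * v - u ^ 2 * v + 4 * v ^ 2 :=
    ⟨_, rfl⟩
  rw [← hEdef] at hD hu' hv' ⊢
  have hd : (v - 27) * E ≠ 0 := mul_ne_zero hW hD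
  have pu : u' * ((v - 27) * E) =
      (v - 3 * u) *
        (324 * u ^ 2 + 15 * u ^ 2 * v - 378 * u * v - 4 * u * v ^ 2 + 243 * v + 72 * v ^ 2) := by
    rw [hu', div_mul_cancel₀ _ hd]
  have pv : v' * E = -4 * (v - 3 * u) ^ 3 := by
    rw [hv', div_mul_cancel₀ _ hD]
  have q1 : (v' - 9 - 2 * u') * ((v - 27) * E) =
      -v * (v - 9 - 2 * u) * (9 * u - 2 * v - 27) ^ 2 := by
    have expand : (v' - 9 - 2 * u') * ((v - 27) * E) =
        (v' * E) * (v - 27) - 9 * ((v - 27) * E) - 2 * (u' * ((v - 27) * E)) := by ring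
    rw [expand, pu, pv, hEdef]; ring
  have q2 : (v' - 27) * E = -v * (9 * u - 2 * v - 27) ^ 2 := by
    have expand : (v' - 27) * E = v' * E - 27 * E := by ring
    rw [expand, pv, hEdef]; ring
  have q3 : (4 * u' ^ 3 + 27 * v' - 18 * u' * v' - u' ^ 2 * v' + 4 * v' ^ 2) *
        ((v - 27) ^ 3 * E ^ 3) =
      4 * v ^ 2 * (v - 3 * u) ^ 3 * (9 * u - 2 * v - 27) ^ 6 := by
    have expand : (4 * u' ^ 3 + 27 * v' - 18 * u' * v' - u' ^ 2 * v' + 4 * v' ^ 2) *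
        ((v - 27) ^ 3 * E ^ 3) =
        4 * (u' * ((v - 27) * E)) ^ 3 +
          27 * (v' * E) * ((v - 27) ^ 3 * E ^ 2) -
          18 * (u' * ((v - 27) * E)) * (v' * E) * ((v - 27) ^ 2 * E) -
          (u' * ((v - 27) * E)) ^ 2 * (v' * E) * (v - 27) +
          4 * (v' * E) ^ 2 * ((v - 27) ^ 3 * E) := by ring
    rw [expand, pu, pv, hEdef]; ring
  have hG' : 4 * u' ^ 3 + 27 * v' - 18 * u' * v' - u' ^ 2 * v' + 4 * v' ^ 2 ≠ 0 := hD'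
  constructor
  · rw [div_eq_div_iff hG' hD]
    have hpow : (v - 27) ^ 3 * E ^ 3 * E ≠ 0 :=
      mul_ne_zero (mul_ne_zero (pow_ne_zero _ hW) (pow_ne_zero _ hD)) hD
    apply mul_left_cancel₀ hpow
    calc (v - 27) ^ 3 * E ^ 3 * E * (27 * v' * (v' - 9 - 2 * u') ^ 3 * E)
        = 27 * (v' * E) * ((v' - 9 - 2 * u') * ((v - 27) * E)) ^ 3 * E := by ring
      _ = 27 * (-4 * (v - 3 * u) ^ 3) *
            (-v * (v - 9 - 2 * u) * (9 * u - 2 * v - 27) ^ 2) ^ 3 * E := by rw [pv, q1]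
      _ = 27 * v * (v - 9 - 2 * u) ^ 3 *
            (4 * v ^ 2 * (v - 3 * u) ^ 3 * (9 * u - 2 * v - 27) ^ 6) * E := by ring
      _ = 27 * v * (v - 9 - 2 * u) ^ 3 *
            ((4 * u' ^ 3 + 27 * v' - 18 * u' * v' - u' ^ 2 * v' + 4 * v' ^ 2) *
              ((v - 27) ^ 3 * E ^ 3)) * E := by rw [q3]
      _ = (v - 27) ^ 3 * E ^ 3 * E * (27 * v * (v - 9 - 2 * u) ^ 3 *
            (4 * u' ^ 3 + 27 * v' - 18 * u' * v' - u' ^ 2 * v' + 4 * v' ^ 2)) := by ring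
  · rw [div_eq_div_iff (mul_ne_zero hW' hG') (mul_ne_zero hW hD)]
    have hpow2 : (v - 27) ^ 4 * E ^ 4 * E ^ 2 ≠ 0 :=
      mul_ne_zero (mul_ne_zero (pow_ne_zero _ hW) (pow_ne_zero _ hD)) (pow_ne_zero _ hD)
    apply mul_left_cancel₀ hpow2
    calc (v - 27) ^ 4 * E ^ 4 * E ^ 2 *
          (-1296 * v' * (v' - 9 - 2 * u') ^ 4 * ((v - 27) * E))
        = -1296 * (v' * E) * ((v' - 9 - 2 * u') * ((v - 27) * E)) ^ 4 *
            ((v - 27) * E ^ 2) := by ring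
      _ = -1296 * (-4 * (v - 3 * u) ^ 3) *
            (-v * (v - 9 - 2 * u) * (9 * u - 2 * v - 27) ^ 2) ^ 4 *
            ((v - 27) * E ^ 2) := by rw [pv, q1]
      _ = -1296 * v * (v - 9 - 2 * u) ^ 4 *
            ((-v * (9 * u - 2 * v - 27) ^ 2) *
              (4 * v ^ 2 * (v - 3 * u) ^ 3 * (9 * u - 2 * v - 27) ^ 6)) *
            ((v - 27) * E ^ 2) := by ring
      _ = -1296 * v * (v - 9 - 2 * u) ^ 4 *
            (((v' - 27) * E) *
              ((4 * u' ^ 3 + 27 * v' - 18 * u' * v' - u' ^ 2 * v' + 4 * v' ^ 2) *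
                ((v - 27) ^ 3 * E ^ 3))) *
            ((v - 27) * E ^ 2) := by rw [q2, q3]
      _ = (v - 27) ^ 4 * E ^ 4 * E ^ 2 *
            (-1296 * v * (v - 9 - 2 * u) ^ 4 *
              ((v' - 27) *
                (4 * u' ^ 3 + 27 * v' - 18 * u' * v' - u' ^ 2 * v' + 4 * v' ^ 2))) := by ring
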